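/- Assume σ ≠ 0. For every integer 0 ≤ l ≤ m, the conditional expectation of the number of old blocks re-observed with frequency l, given complete information, satisfies E[R_l | π] = binom(m,l)·Σ_{i=1}^{n} m_i·(i−σ)_{l↑}·Σ_{k=0}^{m} (V_{n+m,j+k}/V_{n,j})·C(m−l, k; σ, −n + i + (j−1)σ)/σ^k. -/

import Mathlib

open Finset

attribute [local instance] Classical.propDecidable

noncomputable section

/-- Rising factorial `x(x+1)⋯(x+N−1)`. -/
def risingFac (x : ℝ) (N : ℕ) : ℝ := ∏ i ∈ Finset.range N, (x + i)

/-- Falling factorial `x(x−1)⋯(x−N+1)`. -/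
def fallingFac (x : ℝ) (N : ℕ) : ℝ := ∏ i ∈ Finset.range N, (x - i)

/-- Noncentral generalized factorial coefficient `C(N,k;σ,γ)`. -/
def gfc (N k : ℕ) (σ γ : ℝ) : ℝ :=
  (1 / (Nat.factorial k : ℝ)) *
    ∑ i ∈ Finset.range (k + 1),
      (-1 : ℝ) ^ i * (Nat.choose k i : ℝ) * risingFac (-(i : ℝ) * σ - γ) N

/-- Central generalized factorial coefficient `C(N,k;σ)`. -/
def cgfc (N k : ℕ) (σ : ℝ) : ℝ := gfc N k σ 0

/-- Binomial coefficient over `ℤ`, zero unless `0 ≤ b ≤ a`. -/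
def ibinom (a b : ℤ) : ℝ :=
  if 0 ≤ b ∧ b ≤ a then (Nat.choose a.toNat b.toNat : ℝ) else 0

/-- Multinomial coefficient `m!/((l!)^r (m−rl)!)`, zero if `rl > m`. -/
def multinom (m l r : ℕ) : ℝ :=
  if r * l ≤ m then
    (Nat.factorial m : ℝ) / ((Nat.factorial l : ℝ) ^ r * (Nat.factorial (m - r * l) : ℝ))
  else 0

/-- `P` is a set partition of the finset `s`. -/
def IsPartOn {α : Type*} (s : Finset α) (P : Finset (Finset α)) : Prop :=
  (∀ B ∈ P, B ⊆ s) ∧ ∅ ∉ P ∧ ∀ a ∈ s, ∃! B, B ∈ P ∧ a ∈ B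

/-- Restriction of a partition to `s`. -/
def restrictPart {α : Type*} [DecidableEq α] (P : Finset (Finset α)) (s : Finset α) :
    Finset (Finset α) := (P.image fun C => C ∩ s).erase ∅

/-- Gibbs probability of a partition with block sizes `|C|` and `VN k` the Gibbs weight. -/
def gibbsW {α : Type*} (σ : ℝ) (VN : ℕ → ℝ) (P : Finset (Finset α)) : ℝ :=
  VN P.card * ∏ C ∈ P, risingFac (1 - σ) (C.card - 1)

/-- Ewens–Pitman weight system. -/
def EPV (σ θ : ℝ) : ℕ → ℕ → ℝ :=
  fun N k => (∏ i ∈ Finset.range k, (θ + (i : ℝ) * σ)) / risingFac θ N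

/-- The "old" elements `{1,…,n}` inside `{1,…,n+m}`. -/
def oldSet (n m : ℕ) : Finset (Fin (n + m)) :=
  Finset.univ.filter fun x => (x : ℕ) < n

/-- Number of new elements in the block of `ρ` containing the old block `Bi`. -/
def Scount (n m : ℕ) (Bi : Finset (Fin (n + m))) (ρ : Finset (Finset (Fin (n + m)))) : ℕ :=
  ∑ C ∈ ρ.filter (fun C => Bi ⊆ C), (C \ oldSet n m).card

/-- Partitions of `{1,…,n+m}` extending the partition `πP` of the old elements. -/
def extensions (n m : ℕ) (πP : Finset (Finset (Fin (n + m)))) :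
    Finset (Finset (Finset (Fin (n + m)))) :=
  Finset.univ.filter fun ρ => IsPartOn Finset.univ ρ ∧ restrictPart ρ (oldSet n m) = πP

/-- Conditional expectation given complete information (the initial partition `πP`). -/
def condExpPi (σ : ℝ) (V : ℕ → ℕ → ℝ) (n m : ℕ) (πP : Finset (Finset (Fin (n + m))))
    (f : Finset (Finset (Fin (n + m))) → ℝ) : ℝ :=
  (∑ ρ ∈ extensions n m πP, f ρ * gibbsW σ (V (n + m)) ρ) /
    (∑ ρ ∈ extensions n m πP, gibbsW σ (V (n + m)) ρ)

/-- Partitions of `{1,…,n+m}` whose restriction to the old elements has exactly `j` blocks. -/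
def withJ (n m j : ℕ) : Finset (Finset (Finset (Fin (n + m)))) :=
  Finset.univ.filter fun ρ =>
    IsPartOn Finset.univ ρ ∧ (restrictPart ρ (oldSet n m)).card = j

/-- Partitions of `s` with exactly `j` blocks. -/
def partsJOf {α : Type*} [Fintype α] (s : Finset α) (j : ℕ) :
    Finset (Finset (Finset α)) :=
  Finset.univ.filter fun π' => IsPartOn s π' ∧ π'.card = j

/-- Conditional expectation given the incomplete information `K_n = j`. -/
def condExpK (σ : ℝ) (V : ℕ → ℕ → ℝ) (n m j : ℕ)
    (f : Finset (Finset (Fin (n + m))) → ℝ) : ℝ :=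
  (∑ ρ ∈ withJ n m j, f ρ * gibbsW σ (V (n + m)) ρ) /
    (∑ π' ∈ partsJOf (oldSet n m) j, gibbsW σ (V n) π')

/-- Number of old blocks (indexed by `B`) re-observed in the additional sample. -/
def RcntB (n m j : ℕ) (B : Fin j → Finset (Fin (n + m)))
    (ρ : Finset (Finset (Fin (n + m)))) : ℕ :=
  (Finset.univ.filter fun i : Fin j => Scount n m (B i) ρ ≠ 0).card

/-- Number of old blocks (indexed by `B`) re-observed with frequency `l`. -/
def RlcntB (n m j l : ℕ) (B : Fin j → Finset (Fin (n + m)))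
    (ρ : Finset (Finset (Fin (n + m)))) : ℕ :=
  (Finset.univ.filter fun i : Fin j => Scount n m (B i) ρ = l).card

/-- Number of blocks of the restriction whose containing block has a new element. -/
def Rcnt (n m : ℕ) (ρ : Finset (Finset (Fin (n + m)))) : ℕ :=
  ((restrictPart ρ (oldSet n m)).filter fun Bi =>
    ∃ C ∈ ρ, Bi ⊆ C ∧ (C \ oldSet n m) ≠ ∅).card

/-- Number of blocks of the restriction whose containing block has exactly `l` new elements. -/
def Rlcnt (n m l : ℕ) (ρ : Finset (Finset (Fin (n + m)))) : ℕ :=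
  ((restrictPart ρ (oldSet n m)).filter fun Bi =>
    ∃ C ∈ ρ, Bi ⊆ C ∧ (C \ oldSet n m).card = l).card

/-- Number of bijections from `Fin j` onto the blocks of `π'` satisfying `Q`. -/
def bijCount {α : Type*} [Fintype α] (j : ℕ) (π' : Finset (Finset α))
    (Q : (Fin j → Finset α) → Prop) : ℕ :=
  ((Finset.univ : Finset (Fin j → Finset α)).filter fun β =>
    Function.Injective β ∧ Finset.image β Finset.univ = π' ∧ Q β).card

/-- Conditional expectation given almost-complete information. -/
def condExpTau (σ : ℝ) (V : ℕ → ℕ → ℝ) (n m j p : ℕ) (τ : Fin p → Fin j) (nτ : Fin p → ℕ)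
    (f : Finset (Finset (Fin (n + m))) → ℝ) : ℝ :=
  (∑ ρ ∈ withJ n m j,
      (bijCount j (restrictPart ρ (oldSet n m)) (fun β => ∀ i, (β (τ i)).card = nτ i) : ℝ) *
        f ρ * gibbsW σ (V (n + m)) ρ) /
    (∑ π' ∈ partsJOf (oldSet n m) j,
      (bijCount j π' (fun β => ∀ i, (β (τ i)).card = nτ i) : ℝ) * gibbsW σ (V n) π')

/-!
New observations are added one at a time. A new element either opens a singleton block, which
turns the factor `V N k` of the Gibbs weight into `V (N + 1) (k + 1)`, or joins a block `C`, which
turns it into `V (N + 1) k` and multiplies the weight by `|C| - σ`; over all blocks of a partition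
of `N` elements into `k` blocks these factors sum to `N - kσ`. So the total weight of the extensions of a partition with `j` blocks of `n` elements
by `m` new elements obeys the triangular recurrence of `C(m, k; σ, γ) / σ ^ k`, `γ = -n + jσ`,
and equals `∑ k, V (n + m) (j + k) · C(m, k; σ, γ) / σ ^ k`; by the Gibbs recursion this is
`V n j`.

For `R_l`, fix the old block `B_i` and the set `A` of the `l` new elements joining it. The block
`B_i ∪ A` contributes `(1 - σ)_{(n_i - 1)↑} (n_i - σ)_{l↑}`, and the rest of the partition is an
extension of the other `j - 1` old blocks (`n - n_i` elements) by the remaining `m - l` new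
elements. There are `binom(m, l)` choices of `A`, and grouping the old blocks by size gives the
multiplicities `m_i`.
-/

lemma risingFac_succ (x : ℝ) (N : ℕ) : risingFac x (N + 1) = risingFac x N * (x + N) :=
  prod_range_succ _ _

lemma risingFac_add (x : ℝ) (a b : ℕ) :
    risingFac x (a + b) = risingFac x a * risingFac (x + a) b := by
  simp only [risingFac, prod_range_add, Nat.cast_add, add_assoc]

lemma risingFac_pos {x : ℝ} (hx : 0 < x) (N : ℕ) : 0 < risingFac x N :=
  prod_pos fun i _ => by positivity

lemma gfc_zero_succ (N : ℕ) (σ γ : ℝ) : gfc 0 (N + 1) σ γ = 0 := by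
  have h := congrArg (Int.cast (R := ℝ)) (Int.alternating_sum_range_choose (n := N + 1))
  push_cast at h
  simp [gfc, risingFac, h]

lemma gfc_zero_right (N : ℕ) (σ γ : ℝ) : gfc N 0 σ γ = risingFac (-γ) N := by
  simp [gfc]

lemma gfc_succ_zero (N : ℕ) (σ γ : ℝ) : gfc (N + 1) 0 σ γ = (N - γ) * gfc N 0 σ γ := by
  rw [gfc_zero_right, gfc_zero_right, risingFac_succ]
  ring

lemma choose_succ_mul_sub (k i : ℕ) (hi : i ≤ k + 1) :
    ((k + 1).choose i : ℝ) * ((k + 1 : ℝ) - i) = (k + 1) * k.choose i := by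
  have h : (k + 1).choose i * (k + 1 - i) = (k + 1) * k.choose i := by
    rw [← Nat.choose_mul_succ_eq, mul_comm]
  have hR := congrArg (Nat.cast (R := ℝ)) h
  push_cast [Nat.cast_sub hi] at hR
  exact hR

lemma gfc_succ_succ (N k : ℕ) (σ γ : ℝ) :
    gfc (N + 1) (k + 1) σ γ = σ * gfc N k σ γ + (N - (k + 1) * σ - γ) * gfc N (k + 1) σ γ := by
  set r : ℕ → ℝ := fun i => risingFac (-(i : ℝ) * σ - γ) N
  -- the last factor `N - iσ - γ` of the rising factorial is `(N - (k+1)σ - γ) + σ(k + 1 - i)`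
  have hterm : ∀ i ∈ range (k + 2),
      (-1 : ℝ) ^ i * (k + 1).choose i * risingFac (-(i : ℝ) * σ - γ) (N + 1) =
        (N - (k + 1) * σ - γ) * ((-1) ^ i * (k + 1).choose i * r i)
          + σ * (k + 1) * ((-1) ^ i * k.choose i * r i) := by
    intro i hi
    rw [risingFac_succ]
    linear_combination (σ * (-1) ^ i * r i) *
      choose_succ_mul_sub k i (by simpa [Nat.lt_succ_iff] using hi)
  have hlast : ∑ i ∈ range (k + 2), (-1 : ℝ) ^ i * k.choose i * r i =
      ∑ i ∈ range (k + 1), (-1) ^ i * k.choose i * r i := by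
    simp [sum_range_succ _ (k + 1)]
  have hfac : ((k + 1).factorial : ℝ) = (k + 1) * k.factorial := by
    push_cast [Nat.factorial_succ]; ring
  simp only [gfc]
  rw [sum_congr rfl hterm, sum_add_distrib, ← mul_sum, ← mul_sum, hlast, hfac]
  simp only [r]
  field_simp
  ring

lemma gfc_eq_zero_of_lt (σ γ : ℝ) {N k : ℕ} (h : N < k) : gfc N k σ γ = 0 := by
  induction N generalizing k with
  | zero =>
    obtain ⟨k, rfl⟩ : ∃ k', k = k' + 1 := ⟨k - 1, by omega⟩
    exact gfc_zero_succ k σ γ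
  | succ N ih =>
    obtain ⟨k, rfl⟩ : ∃ k', k = k' + 1 := ⟨k - 1, by omega⟩
    rw [gfc_succ_succ, ih (by omega), ih (by omega)]
    ring

def gfcSum (N : ℕ) (σ γ : ℝ) (W : ℕ → ℝ) : ℝ :=
  ∑ k ∈ range (N + 1), W k * (gfc N k σ γ / σ ^ k)

lemma gfcSum_zero (σ γ : ℝ) (W : ℕ → ℝ) : gfcSum 0 σ γ W = W 0 := by
  simp [gfcSum, gfc, risingFac]

lemma gfcSum_succ {σ : ℝ} (hσ : σ ≠ 0) (N : ℕ) (γ : ℝ) (W : ℕ → ℝ) :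
    gfcSum (N + 1) σ γ W = gfcSum N σ γ (fun k => W (k + 1) + (N - k * σ - γ) * W k) := by
  set c : ℕ → ℝ := fun k => gfc N k σ γ / σ ^ k
  set d : ℕ → ℝ := fun k => (N - k * σ - γ) * W k * c k
  have hzero : W 0 * (gfc (N + 1) 0 σ γ / σ ^ 0) = d 0 := by
    simp only [d, c, gfc_succ_zero]
    ring
  have hsucc : ∀ k, W (k + 1) * (gfc (N + 1) (k + 1) σ γ / σ ^ (k + 1)) =
      W (k + 1) * c k + d (k + 1) := by
    intro k
    simp only [d, c, gfc_succ_succ, pow_succ]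
    field_simp
    push_cast
    ring
  have hlast : d (N + 1) = 0 := by simp [d, c, gfc_eq_zero_of_lt σ γ (Nat.lt_succ_self N)]
  calc gfcSum (N + 1) σ γ W
      = ∑ k ∈ range (N + 1), W (k + 1) * c k + ∑ k ∈ range (N + 2), d k := by
        rw [gfcSum, sum_range_succ', sum_range_succ' d, hzero, ← add_assoc, ← sum_add_distrib]
        simp only [hsucc]
    _ = gfcSum N σ γ (fun k => W (k + 1) + (N - k * σ - γ) * W k) := by
        rw [sum_range_succ d, hlast, add_zero, ← sum_add_distrib, gfcSum]
        exact sum_congr rfl fun k _ => by simp only [d, c]; ring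

lemma gfcSum_eq_sum_range {N M : ℕ} (h : N ≤ M) (σ γ : ℝ) (W : ℕ → ℝ) :
    gfcSum N σ γ W = ∑ k ∈ range (M + 1), W k * (gfc N k σ γ / σ ^ k) := by
  refine sum_subset (range_subset_range.mpr (by omega)) fun k _ hk => ?_
  rw [gfc_eq_zero_of_lt σ γ (by simpa using hk), zero_div, mul_zero]

lemma gibbs_weight_eq_gfcSum {σ : ℝ} (hσ : σ ≠ 0) {V : ℕ → ℕ → ℝ}
    (hVrec : ∀ N k, 1 ≤ k → k ≤ N →
      V N k = V (N + 1) (k + 1) + ((N : ℝ) - (k : ℝ) * σ) * V (N + 1) k)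
    {N j : ℕ} (hj : 1 ≤ j) (hjN : j ≤ N) (M : ℕ) :
    V N j = gfcSum M σ (-N + j * σ) (fun k => V (N + M) (j + k)) := by
  induction M with
  | zero => simp [gfcSum_zero]
  | succ M ih =>
    rw [ih, gfcSum_succ hσ]
    refine sum_congr rfl fun k hk => ?_
    have hkM : k ≤ M := Nat.lt_succ_iff.mp (mem_range.mp hk)
    have hrec := hVrec (N + M) (j + k) (by omega) (by omega)
    simp only [← add_assoc] at hrec ⊢
    rw [hrec]
    push_cast
    ring

namespace IsPartOn

variable {α : Type*} {t : Finset α} {P : Finset (Finset α)}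

lemma ne_empty (h : IsPartOn t P) {C : Finset α} (hC : C ∈ P) : C ≠ ∅ :=
  fun h' => h.2.1 (h' ▸ hC)

lemma nonempty (h : IsPartOn t P) {C : Finset α} (hC : C ∈ P) : C.Nonempty :=
  nonempty_iff_ne_empty.mpr (h.ne_empty hC)

lemma notMem_of_notMem (h : IsPartOn t P) {a : α} (ha : a ∉ t) {C : Finset α} (hC : C ∈ P) :
    a ∉ C :=
  fun haC => ha (h.1 C hC haC)

lemma eq_of_mem_of_mem (h : IsPartOn t P) {C D : Finset α} (hC : C ∈ P) (hD : D ∈ P)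
    {x : α} (hxC : x ∈ C) (hxD : x ∈ D) : C = D := by
  obtain ⟨E, -, hE⟩ := h.2.2 x (h.1 C hC hxC)
  rw [hE C ⟨hC, hxC⟩, hE D ⟨hD, hxD⟩]

lemma sum_card [DecidableEq α] (h : IsPartOn t P) : ∑ C ∈ P, C.card = t.card := by
  have ht : t = P.biUnion id := by
    ext x
    simp only [mem_biUnion, id]
    refine ⟨fun hx => ?_, fun ⟨C, hC, hxC⟩ => h.1 C hC hxC⟩
    obtain ⟨C, ⟨hC, hxC⟩, -⟩ := h.2.2 x hx
    exact ⟨C, hC, hxC⟩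
  rw [ht, card_biUnion (t := id) fun C hC D hD hne => disjoint_left.mpr fun _ hxC hxD =>
    hne (h.eq_of_mem_of_mem hC hD hxC hxD)]
  rfl

lemma card_le [DecidableEq α] (h : IsPartOn t P) : P.card ≤ t.card := by
  rw [← h.sum_card, card_eq_sum_ones]
  exact sum_le_sum fun C hC => card_pos.mpr (h.nonempty hC)

lemma card_pos (h : IsPartOn t P) (ht : t.Nonempty) : 0 < P.card := by
  obtain ⟨x, hx⟩ := ht
  obtain ⟨C, ⟨hC, -⟩, -⟩ := h.2.2 x hx
  exact Finset.card_pos.mpr ⟨C, hC⟩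

lemma card_mem_Icc (h : IsPartOn t P) {C : Finset α} (hC : C ∈ P) : C.card ∈ Icc 1 t.card :=
  mem_Icc.mpr ⟨(h.nonempty hC).card_pos, card_le_card (h.1 C hC)⟩

lemma insert_block [DecidableEq α] (h : IsPartOn t P) {X : Finset α} (hXt : Disjoint X t)
    (hX : X ≠ ∅) : IsPartOn (X ∪ t) (insert X P) := by
  refine ⟨?_, ?_, fun x hx => ?_⟩
  · simp only [mem_insert, forall_eq_or_imp]
    exact ⟨subset_union_left, fun C hC => (h.1 C hC).trans subset_union_right⟩
  · simp only [mem_insert, not_or]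
    exact ⟨fun h' => hX h'.symm, h.2.1⟩
  · rcases mem_union.mp hx with hxX | hxt
    · refine ⟨X, ⟨mem_insert_self _ _, hxX⟩, fun D ⟨hD, hxD⟩ => ?_⟩
      rcases mem_insert.mp hD with rfl | hD
      · rfl
      · exact absurd (h.1 D hD hxD) (disjoint_left.mp hXt hxX)
    · obtain ⟨C, ⟨hC, hxC⟩, hu⟩ := h.2.2 x hxt
      refine ⟨C, ⟨mem_insert_of_mem hC, hxC⟩, fun D ⟨hD, hxD⟩ => ?_⟩
      rcases mem_insert.mp hD with rfl | hD
      · exact absurd hxt (disjoint_left.mp hXt hxD)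
      · exact hu D ⟨hD, hxD⟩

lemma erase_block [DecidableEq α] (h : IsPartOn t P) {D : Finset α} (hD : D ∈ P) :
    IsPartOn (t \ D) (P.erase D) := by
  refine ⟨fun C hC x hx => ?_, fun h' => h.2.1 (mem_of_mem_erase h'), fun x hx => ?_⟩
  · exact mem_sdiff.mpr ⟨h.1 C (mem_of_mem_erase hC) hx, fun hxD =>
      ne_of_mem_erase hC (h.eq_of_mem_of_mem (mem_of_mem_erase hC) hD hx hxD)⟩
  · obtain ⟨hxt, hxD⟩ := mem_sdiff.mp hx
    obtain ⟨C, ⟨hC, hxC⟩, hu⟩ := h.2.2 x hxt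
    refine ⟨C, ⟨mem_erase.mpr ⟨fun h' => hxD (h' ▸ hxC), hC⟩, hxC⟩, ?_⟩
    exact fun E ⟨hE, hxE⟩ => hu E ⟨mem_of_mem_erase hE, hxE⟩

lemma of_insert_block [DecidableEq α] {X : Finset α} (h : IsPartOn (X ∪ t) (insert X P))
    (hXt : Disjoint X t) (hXP : X ∉ P) : IsPartOn t P := by
  simpa [erase_insert hXP, union_sdiff_cancel_left hXt] using h.erase_block (mem_insert_self X P)

lemma insert_into_block [DecidableEq α] (h : IsPartOn t P) {a : α} (ha : a ∉ t) {C : Finset α}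
    (hC : C ∈ P) : IsPartOn (insert a t) (insert (insert a C) (P.erase C)) := by
  have hCt := h.1 C hC
  have hdisj : Disjoint (insert a C) (t \ C) := by
    rw [disjoint_insert_left]
    exact ⟨fun hat => ha (mem_sdiff.mp hat).1, disjoint_sdiff⟩
  have hunion : insert a C ∪ t \ C = insert a t := by
    rw [insert_union, union_sdiff_of_subset hCt]
  simpa [hunion] using (h.erase_block hC).insert_block hdisj (insert_ne_empty a C)

lemma insert_into_block_inj [DecidableEq α] {a : α} (ha : a ∉ t) {P₁ P₂ : Finset (Finset α)}
    (h₁ : IsPartOn t P₁) (h₂ : IsPartOn t P₂) {C₁ C₂ : Finset α} (hC₁ : C₁ ∈ P₁) (hC₂ : C₂ ∈ P₂)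
    (heq : insert (insert a C₁) (P₁.erase C₁) = insert (insert a C₂) (P₂.erase C₂)) :
    C₁ = C₂ ∧ P₁ = P₂ := by
  have hn₁ : insert a C₁ ∉ P₁.erase C₁ := fun h' =>
    h₁.notMem_of_notMem ha (mem_of_mem_erase h') (mem_insert_self a C₁)
  have hn₂ : insert a C₂ ∉ P₂.erase C₂ := fun h' =>
    h₂.notMem_of_notMem ha (mem_of_mem_erase h') (mem_insert_self a C₂)
  have hblock : insert a C₁ = insert a C₂ := by
    have hmem : insert a C₁ ∈ insert (insert a C₂) (P₂.erase C₂) := heq ▸ mem_insert_self _ _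
    refine (mem_insert.mp hmem).resolve_right fun h' => ?_
    exact h₂.notMem_of_notMem ha (mem_of_mem_erase h') (mem_insert_self a C₁)
  have hC : C₁ = C₂ := by
    rw [← erase_insert (h₁.notMem_of_notMem ha hC₁), hblock,
      erase_insert (h₂.notMem_of_notMem ha hC₂)]
  subst hC
  have hrest := congrArg (·.erase (insert a C₁)) heq
  simp only [erase_insert hn₁, erase_insert hn₂] at hrest
  exact ⟨rfl, by rw [← insert_erase hC₁, ← insert_erase hC₂, hrest]⟩

lemma notMem_erase_of_subset [DecidableEq α] (h : IsPartOn t P) {A B : Finset α} (hA : A ∈ P)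
    (hB : B.Nonempty) (hBA : B ⊆ A) : B ∉ P.erase A := by
  intro hmem
  obtain ⟨x, hx⟩ := hB
  exact ne_of_mem_erase hmem (h.eq_of_mem_of_mem (mem_of_mem_erase hmem) hA hx (hBA hx))

lemma erase_from_block [DecidableEq α] {a : α} (h : IsPartOn (insert a t) P) (ha : a ∉ t)
    {A : Finset α} (hA : A ∈ P) (haA : a ∈ A) (hA' : A ≠ {a}) :
    IsPartOn t (insert (A.erase a) (P.erase A)) := by
  have hdisj : Disjoint (A.erase a) (insert a t \ A) :=
    disjoint_of_subset_left (erase_subset a A) disjoint_sdiff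
  have hne : A.erase a ≠ ∅ := by
    rw [Ne, erase_eq_empty_iff, not_or]
    exact ⟨(h.nonempty hA).ne_empty, hA'⟩
  have hunion : A.erase a ∪ insert a t \ A = t := by
    have hAt := h.1 A hA
    ext x
    have := @hAt x
    simp only [mem_union, mem_erase, mem_sdiff, mem_insert] at this ⊢
    grind
  simpa [hunion] using (h.erase_block hA).insert_block hdisj hne

lemma filter_superset_eq_singleton [DecidableEq α] (h : IsPartOn t P) {Y D : Finset α}
    (hY : Y.Nonempty) (hD : D ∈ P) (hYD : Y ⊆ D) : P.filter (Y ⊆ ·) = {D} := by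
  ext C
  simp only [mem_filter, mem_singleton]
  refine ⟨fun ⟨hC, hYC⟩ => ?_, fun hCD => hCD ▸ ⟨hD, hYD⟩⟩
  obtain ⟨y, hy⟩ := hY
  exact h.eq_of_mem_of_mem hC hD (hYC hy) (hYD hy)

lemma sum_card_sdiff_filter_superset [DecidableEq α] {s₀ B : Finset α} {ρ : Finset (Finset α)}
    (h : IsPartOn t ρ) (hB : B.Nonempty) {D : Finset α} (hD : D ∈ ρ) (hBD : B ⊆ D) :
    ∑ C ∈ ρ.filter (B ⊆ ·), (C \ s₀).card = (D \ s₀).card := by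
  rw [h.filter_superset_eq_singleton hB hD hBD, sum_singleton]

end IsPartOn

section restrictPart

variable {α : Type*} [DecidableEq α] {P : Finset (Finset α)} {s X : Finset α}

lemma mem_restrictPart : X ∈ restrictPart P s ↔ X ≠ ∅ ∧ ∃ C ∈ P, C ∩ s = X := by
  rw [restrictPart, mem_erase, mem_image]

lemma restrictPart_insert_of_inter_eq_empty (h : X ∩ s = ∅) :
    restrictPart (insert X P) s = restrictPart P s := by
  rw [restrictPart, image_insert, h, erase_insert_eq_erase, restrictPart]

lemma restrictPart_insert_of_inter_ne_empty (h : X ∩ s ≠ ∅) :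
    restrictPart (insert X P) s = insert (X ∩ s) (restrictPart P s) := by
  rw [restrictPart, image_insert, erase_insert_of_ne h, restrictPart]

lemma restrictPart_insert_erase {C : Finset α} (hC : C ∈ P) (h : X ∩ s = C ∩ s) :
    restrictPart (insert X (P.erase C)) s = restrictPart P s := by
  conv_rhs => rw [← insert_erase hC]
  rw [restrictPart, restrictPart, image_insert, image_insert, h]

lemma restrictPart_sdiff_of_disjoint {u : Finset α} (h : ∀ C ∈ P, Disjoint C u) :
    restrictPart P (s \ u) = restrictPart P s := by
  rw [restrictPart, restrictPart, image_congr fun C hC => ?_]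
  rw [← inter_sdiff_assoc,
    sdiff_eq_self_of_disjoint (disjoint_of_subset_left inter_subset_left (h C hC))]

lemma restrictPart_insert_eq_iff {π₀ : Finset (Finset α)} {B : Finset α} (hB : B ∈ π₀)
    (hB' : B.Nonempty) (hX : X ∩ s = B) (hP : ∀ C ∈ P, Disjoint C B) :
    restrictPart (insert X P) s = π₀ ↔ restrictPart P (s \ B) = π₀.erase B := by
  have hBnot : B ∉ restrictPart P s := by
    rw [mem_restrictPart]
    rintro ⟨-, C, hC, hCB⟩
    obtain ⟨b, hb⟩ := hB'
    exact disjoint_left.mp (hP C hC) (mem_of_mem_inter_left (hCB ▸ hb)) hb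
  rw [restrictPart_sdiff_of_disjoint hP, restrictPart_insert_of_inter_ne_empty
    (hX ▸ hB'.ne_empty), hX]
  exact ⟨fun h => by rw [← h, erase_insert hBnot], fun h => by rw [h, insert_erase hB]⟩

lemma IsPartOn.restrictPart_eq (h : IsPartOn s P) : restrictPart P s = P := by
  rw [restrictPart, image_congr fun C hC => inter_eq_left.mpr (h.1 C hC), image_id',
    erase_eq_of_notMem h.2.1]

end restrictPart

section partExtensions

variable {α : Type*} [Fintype α] [DecidableEq α]

def partExtensions (s₀ : Finset α) (π₀ : Finset (Finset α)) (s : Finset α) :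
    Finset (Finset (Finset α)) :=
  univ.filter fun ρ => IsPartOn (s₀ ∪ s) ρ ∧ restrictPart ρ s₀ = π₀

variable {s₀ s : Finset α} {π₀ : Finset (Finset α)}

@[simp]
lemma mem_partExtensions {ρ : Finset (Finset α)} :
    ρ ∈ partExtensions s₀ π₀ s ↔ IsPartOn (s₀ ∪ s) ρ ∧ restrictPart ρ s₀ = π₀ := by
  simp [partExtensions]

lemma partExtensions_empty (hp : IsPartOn s₀ π₀) : partExtensions s₀ π₀ ∅ = {π₀} := by
  ext ρ
  simp only [mem_partExtensions, union_empty, mem_singleton]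
  refine ⟨fun ⟨hρ, hres⟩ => ?_, ?_⟩
  · rw [← hres, hρ.restrictPart_eq]
  · rintro rfl
    exact ⟨hp, hp.restrictPart_eq⟩

lemma sum_partExtensions_insert_singleton {a : α} (ha₀ : a ∉ s₀) (ha : a ∉ s)
    (F : Finset (Finset α) → ℝ) :
    ∑ ρ ∈ (partExtensions s₀ π₀ (insert a s)).filter ({a} ∈ ·), F ρ =
      ∑ ρ ∈ partExtensions s₀ π₀ s, F (insert {a} ρ) := by
  have hat : a ∉ s₀ ∪ s := by simp [ha₀, ha]
  have hground : {a} ∪ (s₀ ∪ s) = s₀ ∪ insert a s := by ext; simp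
  have hres : ∀ ρ : Finset (Finset α), restrictPart (insert {a} ρ) s₀ = restrictPart ρ s₀ :=
    fun ρ => restrictPart_insert_of_inter_eq_empty (singleton_inter_of_notMem ha₀)
  have hsing : ∀ ρ ∈ partExtensions s₀ π₀ s, {a} ∉ ρ := fun ρ hρ hmem =>
    (mem_partExtensions.mp hρ).1.notMem_of_notMem hat hmem (mem_singleton_self a)
  refine sum_nbij' (fun ρ => ρ.erase {a}) (insert {a}) (fun ρ hρ => ?_) (fun ρ hρ => ?_)
    (fun ρ hρ => insert_erase (mem_filter.mp hρ).2) (fun ρ hρ => erase_insert (hsing ρ hρ))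
    (fun ρ hρ => by rw [insert_erase (mem_filter.mp hρ).2])
  · obtain ⟨hρ, ha⟩ := mem_filter.mp hρ
    rw [mem_partExtensions] at hρ ⊢
    rw [← hground, ← insert_erase ha, hres] at hρ
    exact ⟨hρ.1.of_insert_block (disjoint_singleton_left.mpr hat) (notMem_erase _ _), hρ.2⟩
  · obtain ⟨hρ, hρres⟩ := mem_partExtensions.mp hρ
    refine mem_filter.mpr ⟨mem_partExtensions.mpr ⟨?_, (hres ρ).trans hρres⟩, mem_insert_self _ _⟩
    rw [← hground]
    exact hρ.insert_block (disjoint_singleton_left.mpr hat) (singleton_ne_empty a)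

lemma insert_into_block_mem_partExtensions {a : α} (ha₀ : a ∉ s₀) (ha : a ∉ s)
    {ρ : Finset (Finset α)} (hρ : ρ ∈ partExtensions s₀ π₀ s) {C : Finset α} (hC : C ∈ ρ) :
    insert (insert a C) (ρ.erase C) ∈ (partExtensions s₀ π₀ (insert a s)).filter ({a} ∉ ·) := by
  have hat : a ∉ s₀ ∪ s := by simp [ha₀, ha]
  obtain ⟨hpart, hres⟩ := mem_partExtensions.mp hρ
  refine mem_filter.mpr ⟨mem_partExtensions.mpr ⟨?_, ?_⟩, fun hsing => ?_⟩
  · rw [union_insert]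
    exact hpart.insert_into_block hat hC
  · rw [restrictPart_insert_erase hC (insert_inter_of_notMem ha₀), hres]
  · rcases mem_insert.mp hsing with h' | h'
    · obtain ⟨x, hx⟩ := hpart.nonempty hC
      have hxa : x ∈ ({a} : Finset α) := h' ▸ mem_insert_of_mem hx
      exact hpart.notMem_of_notMem hat hC (mem_singleton.mp hxa ▸ hx)
    · exact hpart.notMem_of_notMem hat (mem_of_mem_erase h') (mem_singleton_self a)

lemma exists_insert_into_block_eq {a : α} (ha₀ : a ∉ s₀) (ha : a ∉ s) {ρ : Finset (Finset α)}
    (hρ : ρ ∈ (partExtensions s₀ π₀ (insert a s)).filter ({a} ∉ ·)) :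
    ∃ ρ' ∈ partExtensions s₀ π₀ s, ∃ C ∈ ρ', insert (insert a C) (ρ'.erase C) = ρ := by
  have hat : a ∉ s₀ ∪ s := by simp [ha₀, ha]
  obtain ⟨hρ, hsing⟩ := mem_filter.mp hρ
  obtain ⟨hpart, hres⟩ := mem_partExtensions.mp hρ
  rw [union_insert] at hpart
  obtain ⟨A, ⟨hA, haA⟩, -⟩ := hpart.2.2 a (mem_insert_self _ _)
  have hA' : A ≠ {a} := fun h' => hsing (h' ▸ hA)
  have hne : (A.erase a).Nonempty := by
    rw [nonempty_iff_ne_empty, Ne, erase_eq_empty_iff, not_or]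
    exact ⟨(hpart.nonempty hA).ne_empty, hA'⟩
  refine ⟨insert (A.erase a) (ρ.erase A), ?_, A.erase a, mem_insert_self _ _, ?_⟩
  · refine mem_partExtensions.mpr ⟨hpart.erase_from_block hat hA haA hA', ?_⟩
    rw [restrictPart_insert_erase hA (by rw [erase_inter, erase_eq_of_notMem (by simp [ha₀])]),
      hres]
  · rw [erase_insert (hpart.notMem_erase_of_subset hA hne (erase_subset a A)), insert_erase haA,
      insert_erase hA]

lemma sum_partExtensions_insert_join {a : α} (ha₀ : a ∉ s₀) (ha : a ∉ s)
    (F : Finset (Finset α) → ℝ) :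
    ∑ ρ ∈ (partExtensions s₀ π₀ (insert a s)).filter ({a} ∉ ·), F ρ =
      ∑ ρ ∈ partExtensions s₀ π₀ s, ∑ C ∈ ρ, F (insert (insert a C) (ρ.erase C)) := by
  have hat : a ∉ s₀ ∪ s := by simp [ha₀, ha]
  rw [sum_sigma']
  refine (sum_bij (fun x _ => insert (insert a x.2) (x.1.erase x.2))
    (fun x hx => insert_into_block_mem_partExtensions ha₀ ha (mem_sigma.mp hx).1
      (mem_sigma.mp hx).2)
    ?_ (fun ρ hρ => ?_) fun _ _ => rfl).symm
  · rintro ⟨ρ₁, C₁⟩ hx₁ ⟨ρ₂, C₂⟩ hx₂ heq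
    obtain ⟨hρ₁, hC₁⟩ := mem_sigma.mp hx₁
    obtain ⟨hρ₂, hC₂⟩ := mem_sigma.mp hx₂
    obtain ⟨rfl, rfl⟩ := (mem_partExtensions.mp hρ₁).1.insert_into_block_inj hat
      (mem_partExtensions.mp hρ₂).1 hC₁ hC₂ heq
    rfl
  · obtain ⟨ρ', hρ', C, hC, rfl⟩ := exists_insert_into_block_eq ha₀ ha hρ
    exact ⟨⟨ρ', C⟩, mem_sigma.mpr ⟨hρ', hC⟩, rfl⟩

lemma sum_partExtensions_insert {a : α} (ha₀ : a ∉ s₀) (ha : a ∉ s)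
    (F : Finset (Finset α) → ℝ) :
    ∑ ρ ∈ partExtensions s₀ π₀ (insert a s), F ρ =
      ∑ ρ ∈ partExtensions s₀ π₀ s,
        (F (insert {a} ρ) + ∑ C ∈ ρ, F (insert (insert a C) (ρ.erase C))) := by
  rw [← sum_filter_add_sum_filter_not _ ({a} ∈ ·), sum_partExtensions_insert_singleton ha₀ ha,
    sum_partExtensions_insert_join ha₀ ha, sum_add_distrib]

end partExtensions

section gibbsW

variable {α : Type*} [DecidableEq α] {σ : ℝ}

lemma risingFac_one_sub_card_insert {C : Finset α} {a : α} (haC : a ∉ C) (hC : C.Nonempty) :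
    risingFac (1 - σ) ((insert a C).card - 1) = (C.card - σ) * risingFac (1 - σ) (C.card - 1) := by
  obtain ⟨k, hk⟩ : ∃ k, C.card = k + 1 := ⟨C.card - 1, by have := hC.card_pos; omega⟩
  rw [card_insert_of_notMem haC, hk, Nat.add_sub_cancel, Nat.add_sub_cancel, risingFac_succ]
  push_cast
  ring

lemma gibbsW_insert_singleton {t : Finset α} {ρ : Finset (Finset α)} (h : IsPartOn t ρ) {a : α}
    (ha : a ∉ t) (W : ℕ → ℝ) : gibbsW σ W (insert {a} ρ) = gibbsW σ (fun k => W (k + 1)) ρ := by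
  have hsing : {a} ∉ ρ := fun hmem => h.notMem_of_notMem ha hmem (mem_singleton_self a)
  simp [gibbsW, card_insert_of_notMem hsing, prod_insert hsing, risingFac]

lemma sum_gibbsW_insert_into_block {t : Finset α} {ρ : Finset (Finset α)} (h : IsPartOn t ρ)
    {a : α} (ha : a ∉ t) (W : ℕ → ℝ) :
    ∑ C ∈ ρ, gibbsW σ W (insert (insert a C) (ρ.erase C)) =
      (t.card - ρ.card * σ) * gibbsW σ W ρ := by
  have hterm : ∀ C ∈ ρ, gibbsW σ W (insert (insert a C) (ρ.erase C)) =
      (C.card - σ) * gibbsW σ W ρ := by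
    intro C hC
    have hnm : insert a C ∉ ρ.erase C := fun h' =>
      h.notMem_of_notMem ha (mem_of_mem_erase h') (mem_insert_self a C)
    have hcard : (insert (insert a C) (ρ.erase C)).card = ρ.card := by
      rw [card_insert_of_notMem hnm, card_erase_add_one hC]
    rw [gibbsW, gibbsW, hcard, prod_insert hnm,
      risingFac_one_sub_card_insert (h.notMem_of_notMem ha hC) (h.nonempty hC),
      ← mul_prod_erase ρ _ hC]
    ring
  rw [sum_congr rfl hterm, ← sum_mul, sum_sub_distrib, ← Nat.cast_sum, h.sum_card, sum_const,
    nsmul_eq_mul]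

lemma gibbsW_insert_union {A B : Finset α} (hBA : Disjoint B A) (hB : B.Nonempty)
    {ρ : Finset (Finset α)} (hρ : B ∪ A ∉ ρ) (W : ℕ → ℝ) :
    gibbsW σ W (insert (B ∪ A) ρ) =
      risingFac (1 - σ) (B.card - 1) * risingFac (B.card - σ) A.card *
        gibbsW σ (fun k => W (k + 1)) ρ := by
  obtain ⟨k, hk⟩ : ∃ k, B.card = k + 1 := ⟨B.card - 1, by have := hB.card_pos; omega⟩
  have hcard : (B ∪ A).card - 1 = k + A.card := by rw [card_union_of_disjoint hBA, hk]; omega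
  rw [gibbsW, gibbsW, card_insert_of_notMem hρ, prod_insert hρ, hcard, risingFac_add, hk,
    Nat.add_sub_cancel]
  push_cast
  rw [sub_add_eq_add_sub, add_comm 1]
  ring

end gibbsW

section sumGibbsW

variable {α : Type*} [Fintype α] [DecidableEq α] {s₀ : Finset α} {π₀ : Finset (Finset α)}

theorem sum_gibbsW_partExtensions {σ : ℝ} (hσ : σ ≠ 0) (hp : IsPartOn s₀ π₀) {s : Finset α}
    (hs : Disjoint s s₀) (W : ℕ → ℝ) :
    ∑ ρ ∈ partExtensions s₀ π₀ s, gibbsW σ W ρ =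
      (∏ C ∈ π₀, risingFac (1 - σ) (C.card - 1)) *
        gfcSum s.card σ (-s₀.card + π₀.card * σ) (fun k => W (π₀.card + k)) := by
  induction s using Finset.induction_on generalizing W with
  | empty =>
    rw [partExtensions_empty hp, sum_singleton, card_empty, gfcSum_zero, gibbsW, add_zero, mul_comm]
  | @insert a s ha ih =>
    have ha₀ : a ∉ s₀ := disjoint_left.mp hs (mem_insert_self a s)
    have hs' : Disjoint s s₀ := disjoint_of_subset_left (subset_insert a s) hs
    have hat : a ∉ s₀ ∪ s := by simp [ha₀, ha]
    have hstep : ∀ ρ ∈ partExtensions s₀ π₀ s,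
        gibbsW σ W (insert {a} ρ) + ∑ C ∈ ρ, gibbsW σ W (insert (insert a C) (ρ.erase C)) =
          gibbsW σ (fun k => W (k + 1) + ((s₀.card + s.card : ℕ) - k * σ) * W k) ρ := by
      intro ρ hρ
      have hpart := (mem_partExtensions.mp hρ).1
      rw [gibbsW_insert_singleton hpart hat, sum_gibbsW_insert_into_block hpart hat,
        card_union_of_disjoint hs'.symm, gibbsW, gibbsW, gibbsW]
      ring
    rw [sum_partExtensions_insert ha₀ ha, sum_congr rfl hstep, ih hs', card_insert_of_notMem ha,
      gfcSum_succ hσ]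
    congr 2
    funext k
    push_cast
    rw [← add_assoc]
    ring

end sumGibbsW

lemma disjoint_sdiff_union_sdiff {α : Type*} [DecidableEq α] {s₀ s B : Finset α}
    (hs : Disjoint s s₀) (hB₀ : B ⊆ s₀) (A : Finset α) :
    Disjoint ((s₀ \ B) ∪ (s \ A)) B :=
  disjoint_union_left.mpr ⟨sdiff_disjoint,
    disjoint_of_subset_left sdiff_subset (disjoint_of_subset_right hB₀ hs)⟩

lemma union_sdiff_eq_of_subset_of_disjoint {α : Type*} [DecidableEq α] {s₀ A B : Finset α}
    (hB₀ : B ⊆ s₀) (hA : Disjoint A s₀) : (B ∪ A) \ s₀ = A := by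
  rw [union_sdiff_distrib, sdiff_eq_empty_iff_subset.mpr hB₀, empty_union,
    sdiff_eq_self_of_disjoint hA]

section blockRemoval

variable {α : Type*} [Fintype α] [DecidableEq α] {s₀ s : Finset α} {π₀ : Finset (Finset α)}
  {B : Finset α}

lemma notMem_of_mem_partExtensions_sdiff (hs : Disjoint s s₀) (hB₀ : B ⊆ s₀) (hB : B.Nonempty)
    {π : Finset (Finset α)} {A : Finset α} {ρ : Finset (Finset α)}
    (hρ : ρ ∈ partExtensions (s₀ \ B) π (s \ A))
    {X : Finset α} (hBX : B ⊆ X) : X ∉ ρ := fun hX => by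
  obtain ⟨b, hb⟩ := hB
  have hXB := disjoint_of_subset_left ((mem_partExtensions.mp hρ).1.1 X hX)
    (disjoint_sdiff_union_sdiff hs hB₀ A)
  exact disjoint_left.mp hXB (hBX hb) hb

lemma insert_mem_partExtensions_iff (hp : IsPartOn s₀ π₀) (hs : Disjoint s s₀) (hB : B ∈ π₀)
    {A : Finset α} (hA : A ⊆ s) {ρ : Finset (Finset α)} (hρ : B ∪ A ∉ ρ) :
    insert (B ∪ A) ρ ∈ partExtensions s₀ π₀ s ↔
      ρ ∈ partExtensions (s₀ \ B) (π₀.erase B) (s \ A) := by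
  have hB₀ : B ⊆ s₀ := hp.1 B hB
  have hAs₀ : Disjoint A s₀ := disjoint_of_subset_left hA hs
  have hdisj : Disjoint (B ∪ A) ((s₀ \ B) ∪ (s \ A)) := by
    refine disjoint_union_left.mpr ⟨(disjoint_sdiff_union_sdiff hs hB₀ A).symm, ?_⟩
    exact disjoint_union_right.mpr
      ⟨disjoint_of_subset_right sdiff_subset hAs₀, disjoint_sdiff⟩
  have hunion : (B ∪ A) ∪ ((s₀ \ B) ∪ (s \ A)) = s₀ ∪ s := by
    ext x
    have := @hB₀ x
    have := @hA x
    simp only [mem_union, mem_sdiff]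
    tauto
  have hinter : (B ∪ A) ∩ s₀ = B := by
    rw [union_inter_distrib_right, inter_eq_left.mpr hB₀, disjoint_iff_inter_eq_empty.mp hAs₀,
      union_empty]
  have hres {ρ} (h : IsPartOn ((s₀ \ B) ∪ (s \ A)) ρ) :=
    restrictPart_insert_eq_iff hB (hp.nonempty hB) hinter fun C hC =>
      disjoint_of_subset_left (h.1 C hC) (disjoint_sdiff_union_sdiff hs hB₀ A)
  rw [mem_partExtensions, mem_partExtensions, ← hunion]
  constructor
  · rintro ⟨hpart, hρres⟩
    have hρpart := hpart.of_insert_block hdisj hρ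
    exact ⟨hρpart, (hres hρpart).mp hρres⟩
  · rintro ⟨hρpart, hρres⟩
    exact ⟨hρpart.insert_block hdisj (by simp [hp.ne_empty hB]), (hres hρpart).mpr hρres⟩

lemma exists_insert_union_eq (hp : IsPartOn s₀ π₀) (hs : Disjoint s s₀) (hB : B ∈ π₀)
    {ρ : Finset (Finset α)} (hρ : ρ ∈ partExtensions s₀ π₀ s) :
    ∃ D ∈ ρ, B ⊆ D ∧ D \ s₀ ⊆ s ∧ B ∪ D \ s₀ = D ∧
      ρ.erase D ∈ partExtensions (s₀ \ B) (π₀.erase B) (s \ (D \ s₀)) := by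
  obtain ⟨hpart, hres⟩ := mem_partExtensions.mp hρ
  obtain ⟨-, D, hD, hDB⟩ := mem_restrictPart.mp (hres ▸ hB : B ∈ restrictPart ρ s₀)
  have hAs : D \ s₀ ⊆ s := fun x hx => by
    obtain ⟨hxD, hx₀⟩ := mem_sdiff.mp hx
    exact (mem_union.mp (hpart.1 D hD hxD)).resolve_left hx₀
  have hDeq : B ∪ D \ s₀ = D := by rw [← hDB, union_comm, sdiff_union_inter]
  have hnm : B ∪ D \ s₀ ∉ ρ.erase D := by rw [hDeq]; exact notMem_erase D ρ
  refine ⟨D, hD, hDB ▸ inter_subset_left, hAs, hDeq, ?_⟩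
  rw [← insert_mem_partExtensions_iff hp hs hB hAs hnm, hDeq, insert_erase hD]
  exact hρ

lemma insert_union_inj (hs : Disjoint s s₀) (hB₀ : B ⊆ s₀) (hB : B.Nonempty)
    {A₁ A₂ : Finset α} (hA₁ : A₁ ⊆ s) (hA₂ : A₂ ⊆ s) {ρ₁ ρ₂ : Finset (Finset α)}
    (hρ₁ : ρ₁ ∈ partExtensions (s₀ \ B) (π₀.erase B) (s \ A₁))
    (hρ₂ : ρ₂ ∈ partExtensions (s₀ \ B) (π₀.erase B) (s \ A₂))
    (heq : insert (B ∪ A₁) ρ₁ = insert (B ∪ A₂) ρ₂) : A₁ = A₂ ∧ ρ₁ = ρ₂ := by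
  have hnot₁ := notMem_of_mem_partExtensions_sdiff hs hB₀ hB hρ₁ (subset_union_left (s₂ := A₁))
  have hnot₂ := notMem_of_mem_partExtensions_sdiff hs hB₀ hB hρ₂ (subset_union_left (s₂ := A₂))
  have hblock : B ∪ A₁ = B ∪ A₂ := by
    have hmem : B ∪ A₁ ∈ insert (B ∪ A₂) ρ₂ := heq ▸ mem_insert_self _ _
    exact (mem_insert.mp hmem).resolve_right
      (notMem_of_mem_partExtensions_sdiff hs hB₀ hB hρ₂ subset_union_left)
  obtain rfl : A₁ = A₂ := by
    rw [← union_sdiff_eq_of_subset_of_disjoint hB₀ (disjoint_of_subset_left hA₁ hs), hblock,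
      union_sdiff_eq_of_subset_of_disjoint hB₀ (disjoint_of_subset_left hA₂ hs)]
  have hrest := congrArg (·.erase (B ∪ A₁)) heq
  simp only [erase_insert hnot₁, erase_insert hnot₂] at hrest
  exact ⟨rfl, hrest⟩

lemma sum_partExtensions_filter_block (hp : IsPartOn s₀ π₀) (hs : Disjoint s s₀) (hB : B ∈ π₀)
    (l : ℕ) (F : Finset (Finset α) → ℝ) :
    ∑ ρ ∈ (partExtensions s₀ π₀ s).filter
        (fun ρ => ∑ C ∈ ρ.filter (B ⊆ ·), (C \ s₀).card = l), F ρ =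
      ∑ A ∈ s.powersetCard l, ∑ ρ ∈ partExtensions (s₀ \ B) (π₀.erase B) (s \ A),
        F (insert (B ∪ A) ρ) := by
  have hB₀ : B ⊆ s₀ := hp.1 B hB
  rw [sum_sigma']
  refine (sum_bij (fun x _ => insert (B ∪ x.1) x.2) ?_ ?_ ?_ fun _ _ => rfl).symm
  · rintro ⟨A, ρ⟩ hx
    obtain ⟨hA, hρ⟩ := mem_sigma.mp hx
    obtain ⟨hAs, hAl⟩ := mem_powersetCard.mp hA
    have hmem := (insert_mem_partExtensions_iff hp hs hB hAs
      (notMem_of_mem_partExtensions_sdiff hs hB₀ (hp.nonempty hB) hρ subset_union_left)).mpr hρ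
    refine mem_filter.mpr ⟨hmem, ?_⟩
    rw [(mem_partExtensions.mp hmem).1.sum_card_sdiff_filter_superset (hp.nonempty hB)
      (mem_insert_self _ _) subset_union_left,
      union_sdiff_eq_of_subset_of_disjoint hB₀ (disjoint_of_subset_left hAs hs), hAl]
  · rintro ⟨A₁, ρ₁⟩ hx₁ ⟨A₂, ρ₂⟩ hx₂ heq
    simp only [mem_sigma, mem_powersetCard] at hx₁ hx₂ heq
    obtain ⟨rfl, rfl⟩ := insert_union_inj hs hB₀ (hp.nonempty hB) hx₁.1.1 hx₂.1.1 hx₁.2 hx₂.2 heq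
    rfl
  · intro ρ hρ
    obtain ⟨hρext, hρl⟩ := mem_filter.mp hρ
    obtain ⟨D, hD, hBD, hAs, hDeq, hρ'⟩ := exists_insert_union_eq hp hs hB hρext
    refine ⟨⟨D \ s₀, ρ.erase D⟩, mem_sigma.mpr ⟨mem_powersetCard.mpr ⟨hAs, ?_⟩, hρ'⟩, ?_⟩
    · rwa [← (mem_partExtensions.mp hρext).1.sum_card_sdiff_filter_superset (hp.nonempty hB)
        hD hBD]
    · dsimp only
      rw [hDeq, insert_erase hD]

end blockRemoval

section blockWeight

variable {α : Type*} [Fintype α] [DecidableEq α] {s₀ s : Finset α} {π₀ : Finset (Finset α)}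
  {B : Finset α} {σ : ℝ}

theorem sum_gibbsW_filter_block (hσ : σ ≠ 0) (hp : IsPartOn s₀ π₀) (hs : Disjoint s s₀)
    (hB : B ∈ π₀) (l : ℕ) (W : ℕ → ℝ) :
    ∑ ρ ∈ (partExtensions s₀ π₀ s).filter
        (fun ρ => ∑ C ∈ ρ.filter (B ⊆ ·), (C \ s₀).card = l), gibbsW σ W ρ =
      s.card.choose l * ((∏ C ∈ π₀, risingFac (1 - σ) (C.card - 1)) *
        (risingFac (B.card - σ) l * gfcSum (s.card - l) σ
          (-(s₀.card - B.card) + (π₀.card - 1) * σ) (fun k => W (π₀.card + k)))) := by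
  have hB₀ : B ⊆ s₀ := hp.1 B hB
  have hπ₀ : 1 ≤ π₀.card := card_pos.mpr ⟨B, hB⟩
  have hsum : ∀ A ∈ s.powersetCard l,
      ∑ ρ ∈ partExtensions (s₀ \ B) (π₀.erase B) (s \ A), gibbsW σ W (insert (B ∪ A) ρ) =
        (∏ C ∈ π₀, risingFac (1 - σ) (C.card - 1)) * (risingFac (B.card - σ) l *
          gfcSum (s.card - l) σ (-(s₀.card - B.card) + (π₀.card - 1) * σ)
            (fun k => W (π₀.card + k))) := by
    intro A hA
    obtain ⟨hAs, hAl⟩ := mem_powersetCard.mp hA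
    have hBA : Disjoint B A := disjoint_of_subset_right hAs (disjoint_of_subset_left hB₀ hs.symm)
    rw [sum_congr rfl fun ρ hρ => gibbsW_insert_union hBA (hp.nonempty hB)
        (notMem_of_mem_partExtensions_sdiff hs hB₀ (hp.nonempty hB) hρ subset_union_left) W,
      ← mul_sum, sum_gibbsW_partExtensions hσ (hp.erase_block hB)
        (disjoint_of_subset_left sdiff_subset (disjoint_of_subset_right sdiff_subset hs)),
      ← mul_prod_erase π₀ _ hB, card_sdiff_of_subset hAs, card_sdiff_of_subset hB₀,
      card_erase_of_mem hB, hAl, Nat.cast_sub (card_le_card hB₀), Nat.cast_sub hπ₀]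
    have hW : (fun k => W (π₀.card - 1 + k + 1)) = fun k => W (π₀.card + k) := by
      funext k; congr 1; omega
    rw [hW]
    push_cast
    ring
  rw [sum_partExtensions_filter_block hp hs hB l, sum_congr rfl hsum, sum_const,
    card_powersetCard, nsmul_eq_mul]

end blockWeight

lemma sum_comp_eq_sum_card_fiber_mul {ι κ : Type*} [DecidableEq κ] {s : Finset ι} {t : Finset κ}
    {g : ι → κ} (hg : ∀ i ∈ s, g i ∈ t) (f : κ → ℝ) :
    ∑ i ∈ s, f (g i) = ∑ b ∈ t, #{i ∈ s | g i = b} * f b := by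
  simp only [← sum_fiberwise_of_maps_to' hg, sum_const, nsmul_eq_mul]

lemma sum_card_filter_mul {ι β : Type*} (s : Finset β) (t : Finset ι) (p : ι → β → Prop)
    [∀ i b, Decidable (p i b)] (f : β → ℝ) :
    ∑ b ∈ s, #{i ∈ t | p i b} * f b = ∑ i ∈ t, ∑ b ∈ s with p i b, f b := by
  simp only [card_filter, Nat.cast_sum, sum_mul, sum_filter]
  rw [sum_comm]
  simp

lemma card_oldSet (n m : ℕ) : (oldSet n m).card = n := by
  simp [oldSet, Fin.card_filter_val_lt]

lemma card_compl_oldSet (n m : ℕ) : (oldSet n m)ᶜ.card = m := by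
  rw [card_compl, Fintype.card_fin, card_oldSet, Nat.add_sub_cancel_left]

lemma extensions_eq_partExtensions (n m : ℕ) (π : Finset (Finset (Fin (n + m)))) :
    extensions n m π = partExtensions (oldSet n m) π (oldSet n m)ᶜ := by
  simp [extensions, partExtensions]

section completeInformation

variable {n m j : ℕ} {σ : ℝ}

lemma sum_gibbsW_extensions (hσ : σ ≠ 0) {V : ℕ → ℕ → ℝ}
    (hVrec : ∀ N k, 1 ≤ k → k ≤ N →
      V N k = V (N + 1) (k + 1) + ((N : ℝ) - (k : ℝ) * σ) * V (N + 1) k)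
    {π : Finset (Finset (Fin (n + m)))} (hπ : IsPartOn (oldSet n m) π) (hπ₁ : 1 ≤ π.card) :
    ∑ ρ ∈ extensions n m π, gibbsW σ (V (n + m)) ρ =
      (∏ C ∈ π, risingFac (1 - σ) (C.card - 1)) * V n π.card := by
  rw [extensions_eq_partExtensions, sum_gibbsW_partExtensions hσ hπ disjoint_compl_left,
    card_compl_oldSet, card_oldSet,
    ← gibbs_weight_eq_gfcSum hσ hVrec hπ₁ (hπ.card_le.trans_eq (card_oldSet n m))]

lemma sum_RlcntB_mul_gibbsW (hσ : σ ≠ 0) {B : Fin j → Finset (Fin (n + m))}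
    (hB : Function.Injective B) (hπ : IsPartOn (oldSet n m) (image B univ)) (l : ℕ)
    (W : ℕ → ℝ) :
    ∑ ρ ∈ extensions n m (image B univ), (RlcntB n m j l B ρ : ℝ) * gibbsW σ W ρ =
      ∑ i, m.choose l * ((∏ C ∈ image B univ, risingFac (1 - σ) (C.card - 1)) *
        (risingFac ((B i).card - σ) l * gfcSum (m - l) σ (-(n - (B i).card) + (j - 1) * σ)
          (fun k => W (j + k)))) := by
  have hπj : (image B univ).card = j := by simp [card_image_of_injective _ hB]
  simp only [RlcntB, sum_card_filter_mul, extensions_eq_partExtensions]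
  refine sum_congr rfl fun i _ => ?_
  have h := sum_gibbsW_filter_block hσ hπ disjoint_compl_left (mem_image_of_mem B (mem_univ i)) l W
  rwa [card_compl_oldSet, card_oldSet, hπj] at h

end completeInformation

theorem looking_backward_freq_estimator_complete_general
    (n m j : ℕ) (hn : 1 ≤ n)
    (σ : ℝ) (hσ1 : σ < 1) (hσ0 : σ ≠ 0)
    (V : ℕ → ℕ → ℝ)
    (hVrec : ∀ N k, 1 ≤ k → k ≤ N →
      V N k = V (N + 1) (k + 1) + ((N : ℝ) - (k : ℝ) * σ) * V (N + 1) k)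
    (B : Fin j → Finset (Fin (n + m))) (hBinj : Function.Injective B)
    (hπ : IsPartOn (oldSet n m) (Finset.image B Finset.univ))
    (l : ℕ) :
    condExpPi σ V n m (Finset.image B Finset.univ)
        (fun ρ => (RlcntB n m j l B ρ : ℝ)) =
      (Nat.choose m l : ℝ) *
        ∑ i ∈ Finset.Icc 1 n,
          ((Finset.univ.filter fun ℓ : Fin j => (B ℓ).card = i).card : ℝ) *
            risingFac ((i : ℝ) - σ) l *
            ∑ k ∈ Finset.range (m + 1),
              V (n + m) (j + k) / V n j *
                (gfc (m - l) k σ (-(n : ℝ) + (i : ℝ) + ((j : ℝ) - 1) * σ) / σ ^ k) := by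
  have hπj : (image B univ).card = j := by simp [card_image_of_injective _ hBinj]
  have hj : 1 ≤ (image B univ).card :=
    hπ.card_pos (Finset.card_pos.mp (by rw [card_oldSet]; omega))
  have hG : (∏ C ∈ image B univ, risingFac (1 - σ) (C.card - 1)) ≠ 0 :=
    (prod_pos fun C _ => risingFac_pos (by linarith) _).ne'
  have hcard : ∀ i ∈ univ, (B i).card ∈ Icc 1 n := fun i _ => by
    simpa [card_oldSet] using hπ.card_mem_Icc (mem_image_of_mem B (mem_univ i))
  have hγ : ∀ b : ℝ, -(n - b) + (j - 1) * σ = -n + b + (j - 1) * σ := fun b => by ring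
  rw [condExpPi, sum_RlcntB_mul_gibbsW hσ0 hBinj hπ l, sum_gibbsW_extensions hσ0 hVrec hπ hj,
    hπj, ← mul_sum, ← mul_sum, mul_div_assoc, mul_div_mul_left _ _ hG, sum_div]
  simp only [hγ, gfcSum_eq_sum_range (Nat.sub_le m l), mul_div_assoc, sum_div, mul_assoc]
  rw [← sum_comp_eq_sum_card_fiber_mul hcard (fun b : ℕ => risingFac (b - σ) l *
    ∑ k ∈ range (m + 1), V (n + m) (j + k) / V n j *
      (gfc (m - l) k σ (-n + b + (j - 1) * σ) / σ ^ k))]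
  refine congrArg _ (sum_congr rfl fun i _ => congrArg _ (sum_congr rfl fun k _ => ?_))
  ring

/-- expected number of old species re-observed with frequency `l`,
given complete information. -/
theorem looking_backward_freq_estimator_complete
    (n m j : ℕ) (hn : 1 ≤ n) (hm : 1 ≤ m)
    (σ : ℝ) (hσ1 : σ < 1) (hσ0 : σ ≠ 0)
    (V : ℕ → ℕ → ℝ) (hV11 : V 1 1 = 1)
    (hVnn : ∀ N k, 1 ≤ k → k ≤ N → 0 ≤ V N k)
    (hVrec : ∀ N k, 1 ≤ k → k ≤ N →
      V N k = V (N + 1) (k + 1) + ((N : ℝ) - (k : ℝ) * σ) * V (N + 1) k)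
    (B : Fin j → Finset (Fin (n + m))) (hBinj : Function.Injective B)
    (hπ : IsPartOn (oldSet n m) (Finset.image B Finset.univ))
    (hVnj : 0 < V n j)
    (l : ℕ) (hl : l ≤ m) :
    condExpPi σ V n m (Finset.image B Finset.univ)
        (fun ρ => (RlcntB n m j l B ρ : ℝ)) =
      (Nat.choose m l : ℝ) *
        ∑ i ∈ Finset.Icc 1 n,
          ((Finset.univ.filter fun ℓ : Fin j => (B ℓ).card = i).card : ℝ) *
            risingFac ((i : ℝ) - σ) l *
            ∑ k ∈ Finset.range (m + 1),
              V (n + m) (j + k) / V n j *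
                (gfc (m - l) k σ (-(n : ℝ) + (i : ℝ) + ((j : ℝ) - 1) * σ) / σ ^ k) :=
  looking_backward_freq_estimator_complete_general n m j hn σ hσ1 hσ0 V hVrec B hBinj hπ l
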